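/- arXiv:2603.04812 — 3 statements merged into one kernel-verified Lean document; each statement's English description precedes it below -/
import Mathlib

section
/- Let n ≥ 0, let C be an invertible (n+2)×(n+2) real matrix, and let A ⊆ ℝ^{n+1} be a nonempty closed convex set. Write ι : ℝ^{n+1} → ℝ^{n+2} for the homogeneous lift ι(x) = (x, 1). Then the double polar recovers A exactly: {a ∈ ℝ^{n+1} : ∀ b ∈ ℝ^{n+2}, (∀ x ∈ A, ι(x)ᵀ C b ≥ 0) → bᵀ Cᵀ ι(a) ≥ 0} = A. (Polarity involution: Δ*_C(Δ_C(A)) = A on the affine slice of homogeneous coordinates.) -/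
/-!
A point `a ∉ A` is strictly separated from the closed convex set `A` by an affine functional
`x ↦ x ⬝ᵥ g - u`, which in homogeneous coordinates is the linear functional `Fin.snoc g (-u)`:
nonnegative on the lift of `A`, negative at the lift of `a`. Since `C` is invertible, `C *ᵥ b`
ranges over all such functionals, and the transpose turns the dual condition into the same pairing.
-/

open Matrix

lemma snoc_dotProduct_snoc {R : Type*} [NonUnitalNonAssocSemiring R] {m : ℕ}
    (x y : Fin (m + 1) → R) (s t : R) :
    (Fin.snoc x s : Fin (m + 2) → R) ⬝ᵥ (Fin.snoc y t : Fin (m + 2) → R) = x ⬝ᵥ y + s * t := by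
  simp [dotProduct, Fin.sum_univ_castSucc]

lemma LinearMap.exists_eq_dotProduct {ι R : Type*} [Fintype ι] [DecidableEq ι] [CommSemiring R]
    (f : (ι → R) →ₗ[R] R) : ∃ g : ι → R, ∀ x, f x = x ⬝ᵥ g :=
  ⟨fun i => f fun j => if i = j then 1 else 0, fun x => f.pi_apply_eq_sum_univ x⟩

lemma exists_dotProduct_lt_of_notMem {ι : Type*} [Fintype ι] {A : Set (ι → ℝ)}
    (hclosed : IsClosed A) (hconv : Convex ℝ A) {a : ι → ℝ} (ha : a ∉ A) :
    ∃ (g : ι → ℝ) (u : ℝ), a ⬝ᵥ g < u ∧ ∀ x ∈ A, u < x ⬝ᵥ g := by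
  classical
  obtain ⟨f, u, hfa, hfA⟩ := geometric_hahn_banach_point_closed hconv hclosed ha
  obtain ⟨g, hg⟩ := (f : (ι → ℝ) →ₗ[ℝ] ℝ).exists_eq_dotProduct
  exact ⟨g, u, hg a ▸ hfa, fun x hx => hg x ▸ hfA x hx⟩

lemma mem_of_forall_snoc_dotProduct_nonneg {m : ℕ} {A : Set (Fin (m + 1) → ℝ)}
    (hclosed : IsClosed A) (hconv : Convex ℝ A) {a : Fin (m + 1) → ℝ}
    (h : ∀ c : Fin (m + 2) → ℝ, (∀ x ∈ A, 0 ≤ (Fin.snoc x 1 : Fin (m + 2) → ℝ) ⬝ᵥ c) →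
      0 ≤ (Fin.snoc a 1 : Fin (m + 2) → ℝ) ⬝ᵥ c) :
    a ∈ A := by
  by_contra ha
  obtain ⟨g, u, hga, hgA⟩ := exists_dotProduct_lt_of_notMem hclosed hconv ha
  have hA : ∀ x ∈ A, 0 ≤ (Fin.snoc x 1 : Fin (m + 2) → ℝ) ⬝ᵥ Fin.snoc g (-u) := by
    intro x hx
    rw [snoc_dotProduct_snoc]
    linarith [hgA x hx]
  have := h _ hA
  rw [snoc_dotProduct_snoc] at this
  linarith

theorem polarity_involution_affine_general
    (n : ℕ) (C : Matrix (Fin (n + 2)) (Fin (n + 2)) ℝ) (hC : IsUnit C)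
    (A : Set (Fin (n + 1) → ℝ))
    (hclosed : IsClosed A) (hconv : Convex ℝ A) :
    {a : Fin (n + 1) → ℝ | ∀ b : Fin (n + 2) → ℝ,
        (∀ x ∈ A, (Fin.snoc x 1 : Fin (n + 2) → ℝ) ⬝ᵥ (C *ᵥ b) ≥ 0) →
        b ⬝ᵥ (Cᵀ *ᵥ (Fin.snoc a 1 : Fin (n + 2) → ℝ)) ≥ 0} = A := by
  ext a
  simp only [Set.mem_ofPred_eq, dotProduct_transpose_mulVec]
  refine ⟨fun h => mem_of_forall_snoc_dotProduct_nonneg hclosed hconv fun c hc => ?_,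
    fun ha b hb => hb a ha⟩
  obtain ⟨b, rfl⟩ := mulVec_surjective_iff_isUnit.mpr hC c
  exact h b hc

theorem polarity_involution_affine
    (n : ℕ) (C : Matrix (Fin (n + 2)) (Fin (n + 2)) ℝ) (hC : IsUnit C)
    (A : Set (Fin (n + 1) → ℝ)) (hne : A.Nonempty)
    (hclosed : IsClosed A) (hconv : Convex ℝ A) :
    {a : Fin (n + 1) → ℝ | ∀ b : Fin (n + 2) → ℝ,
        (∀ x ∈ A, (Fin.snoc x 1 : Fin (n + 2) → ℝ) ⬝ᵥ (C *ᵥ b) ≥ 0) →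
        b ⬝ᵥ (Cᵀ *ᵥ (Fin.snoc a 1 : Fin (n + 2) → ℝ)) ≥ 0} = A :=
  polarity_involution_affine_general n C hC A hclosed hconv
end

section
/- Let F : ℝⁿ → ℝ be any function and let F* : ℝⁿ → EReal denote its Legendre–Fenchel conjugate F*(η) = ⨆_{θ ∈ ℝⁿ} (⟨θ, η⟩ − F(θ)) (supremum taken in the extended reals). For all η ∈ ℝⁿ and y* ∈ ℝ, the homogeneous point (η, y*, 1) ∈ ℝ^{n+2} belongs to the Legendre polar Δ_{C_L}({(θ, F(θ), 1) : θ ∈ ℝⁿ}) if and only if y* ≥ F*(η) (as extended reals). In other words, the λ = 1 slice of the Legendre polar of the lifted graph of F is exactly the lifted epigraph of the convex conjugate F*. -/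
open Matrix

/-- The Legendre cost matrix `C_L = [[-I_n, 0, 0], [0, 0, 1], [0, 1, 0]]`. -/
def legendreCost (n : ℕ) : Matrix (Fin (n + 2)) (Fin (n + 2)) ℝ :=
  Matrix.of fun i j =>
    if i.val < n ∧ j.val < n then (if i = j then -1 else 0)
    else if (i.val = n ∧ j.val = n + 1) ∨ (i.val = n + 1 ∧ j.val = n) then 1
    else 0

/-- Homogeneous lift of `(θ, u, s) ∈ ℝⁿ × ℝ × ℝ` into `ℝ^{n+2}`. -/
def homLift {n : ℕ} (θ : Fin n → ℝ) (u s : ℝ) : Fin (n + 2) → ℝ :=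
  Fin.snoc (Fin.snoc θ u) s

lemma legendreCost_mulVec_homLift {n : ℕ} (η : Fin n → ℝ) (v t : ℝ) :
    legendreCost n *ᵥ homLift η v t = homLift (-η) t v := by
  funext i
  refine Fin.lastCases ?_ (fun i => Fin.lastCases ?_ (fun i => ?_) i) i <;>
    simp [mulVec, dotProduct, Fin.sum_univ_castSucc, homLift, legendreCost, Fin.castSucc_inj,
      Nat.ne_of_lt, Fin.is_lt]

lemma homLift_dotProduct_homLift {n : ℕ} (θ η : Fin n → ℝ) (u s v t : ℝ) :
    homLift θ u s ⬝ᵥ homLift η v t = θ ⬝ᵥ η + u * v + s * t := by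
  simp [homLift, dotProduct, Fin.sum_univ_castSucc]

lemma homLift_dotProduct_legendreCost_mulVec_homLift {n : ℕ} (θ η : Fin n → ℝ) (u s v t : ℝ) :
    homLift θ u s ⬝ᵥ (legendreCost n *ᵥ homLift η v t) = -(θ ⬝ᵥ η) + u * t + s * v := by
  rw [legendreCost_mulVec_homLift, homLift_dotProduct_homLift, dotProduct_neg]

theorem legendre_polar_of_graph_is_epigraph_of_conjugate
    (n : ℕ) (F : (Fin n → ℝ) → ℝ) (η : Fin n → ℝ) (ystar : ℝ) :
    (∀ θ : Fin n → ℝ,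
        homLift θ (F θ) 1 ⬝ᵥ (legendreCost n *ᵥ homLift η ystar 1) ≥ 0) ↔
      (⨆ θ : Fin n → ℝ, ((θ ⬝ᵥ η - F θ : ℝ) : EReal)) ≤ (ystar : EReal) := by
  rw [iSup_le_iff]
  refine forall_congr' fun θ => ?_
  rw [homLift_dotProduct_legendreCost_mulVec_homLift, EReal.coe_le_coe_iff]
  constructor <;> intro h <;> linarith
end

section
/- Let n ≥ 0 and let C be an invertible (n+2)×(n+2) real matrix. Define the affine deformation matrix M_T = C⁻¹ · C_L (so that C = C_L · M_T⁻¹). Then for every set A ⊆ ℝ^{n+2}, the polar satisfies Δ_C(A) = M_T '' Δ_{C_L}(A), i.e., Δ_C(A) is the image of the Legendre polar Δ_{C_L}(A) under the linear map b ↦ M_T b. (A quadratic polarity is a transformed convex body of the Legendre polarity.) -/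
/-!
`Δ_C(A)` is the preimage of the dual cone of `A` under `b ↦ C b`, so `Δ_{C M}(A)` is the preimage
of `Δ_C(A)` under `M`. Writing `C = L (L⁻¹ C)` for any invertible `L` turns `Δ_C(A)` into the
preimage of `Δ_L(A)` under `L⁻¹ C`, i.e. its image under the inverse map `C⁻¹ L`. For `L = C_L`
it only remains to see that `C_L` is invertible: it is a signed permutation matrix of an
involution, with signs `±1`, hence `C_L² = 1`.
-/

open Matrix

section Polarity

variable {ι R : Type*} [Fintype ι] [CommRing R] [PartialOrder R]

def polarity (C : Matrix ι ι R) (A : Set (ι → R)) : Set (ι → R) :=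
  {b | ∀ a ∈ A, a ⬝ᵥ (C *ᵥ b) ≥ 0}

theorem polarity_mul (C M : Matrix ι ι R) (A : Set (ι → R)) :
    polarity (C * M) A = (M *ᵥ ·) ⁻¹' polarity C A := by
  simp only [polarity, ← mulVec_mulVec]
  rfl

theorem polarity_eq_image_polarity [DecidableEq ι] {C L : Matrix ι ι R} (hC : IsUnit C)
    (hL : IsUnit L) (A : Set (ι → R)) :
    polarity C A = ((C⁻¹ * L) *ᵥ ·) '' polarity L A := by
  have hCdet := (isUnit_iff_isUnit_det C).mp hC
  have hLdet := (isUnit_iff_isUnit_det L).mp hL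
  have hleft : Function.LeftInverse ((L⁻¹ * C) *ᵥ ·) ((C⁻¹ * L) *ᵥ ·) := fun b => by
    dsimp only
    rw [mulVec_mulVec, Matrix.mul_assoc, mul_nonsing_inv_cancel_left _ _ hCdet,
      nonsing_inv_mul _ hLdet, one_mulVec]
  have hright : Function.RightInverse ((L⁻¹ * C) *ᵥ ·) ((C⁻¹ * L) *ᵥ ·) := fun b => by
    dsimp only
    rw [mulVec_mulVec, Matrix.mul_assoc, mul_nonsing_inv_cancel_left _ _ hLdet,
      nonsing_inv_mul _ hCdet, one_mulVec]
  rw [Set.image_eq_preimage_of_inverse hleft hright, ← polarity_mul,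
    mul_nonsing_inv_cancel_left _ _ hLdet]

end Polarity

def legendreSwap (n : ℕ) : Equiv.Perm (Fin (n + 2)) :=
  Equiv.swap (Fin.last n).castSucc (Fin.last (n + 1))

def legendreSign (n : ℕ) (i : Fin (n + 2)) : ℝ :=
  if i.val < n then -1 else 1

theorem legendreCost_apply (n : ℕ) (i j : Fin (n + 2)) :
    legendreCost n i j = if j = legendreSwap n i then legendreSign n i else 0 := by
  have hi := i.isLt
  have hj := j.isLt
  simp only [legendreCost, legendreSwap, legendreSign, Equiv.swap_apply_def, of_apply,
    Fin.ext_iff, apply_ite Fin.val, Fin.val_castSucc, Fin.val_last]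
  split_ifs <;> first | rfl | omega

theorem legendreSwap_legendreSwap (n : ℕ) (i : Fin (n + 2)) :
    legendreSwap n (legendreSwap n i) = i :=
  Equiv.swap_apply_self _ _ _

theorem legendreSign_legendreSwap (n : ℕ) (i : Fin (n + 2)) :
    legendreSign n (legendreSwap n i) = legendreSign n i := by
  have hi := i.isLt
  simp only [legendreSign, legendreSwap, Equiv.swap_apply_def, Fin.ext_iff, apply_ite Fin.val,
    Fin.val_castSucc, Fin.val_last]
  split_ifs <;> first | rfl | omega

theorem legendreSign_mul_self (n : ℕ) (i : Fin (n + 2)) :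
    legendreSign n i * legendreSign n i = 1 := by
  unfold legendreSign
  split_ifs <;> norm_num

theorem legendreCost_mul_self (n : ℕ) : legendreCost n * legendreCost n = 1 := by
  ext i j
  rw [mul_apply, Fintype.sum_eq_single (legendreSwap n i) fun k hk => by
    rw [legendreCost_apply, if_neg hk, zero_mul]]
  rw [legendreCost_apply, legendreCost_apply, if_pos rfl, legendreSign_legendreSwap,
    legendreSwap_legendreSwap, one_apply]
  by_cases hji : j = i
  · rw [if_pos hji, if_pos hji.symm, legendreSign_mul_self]
  · rw [if_neg hji, if_neg (Ne.symm hji), mul_zero]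

theorem isUnit_legendreCost (n : ℕ) : IsUnit (legendreCost n) :=
  IsUnit.of_mul_eq_one_right _ (legendreCost_mul_self n)

theorem quadratic_polarity_as_transformed_legendre_polar
    (n : ℕ) (C : Matrix (Fin (n + 2)) (Fin (n + 2)) ℝ) (hC : IsUnit C)
    (A : Set (Fin (n + 2) → ℝ)) :
    {b : Fin (n + 2) → ℝ | ∀ a ∈ A, a ⬝ᵥ (C *ᵥ b) ≥ 0} =
      (fun b => (C⁻¹ * legendreCost n) *ᵥ b) ''
        {b : Fin (n + 2) → ℝ | ∀ a ∈ A, a ⬝ᵥ (legendreCost n *ᵥ b) ≥ 0} :=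
  polarity_eq_image_polarity hC (isUnit_legendreCost n) A
end
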